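/- Let ρ_{d_s} be the PPT state of the previous construction and σ_{d_s} its version dephased on Alice's key qubit (all off-diagonal blocks set to zero). Then ‖ρ_{d_s}^Γ − σ_{d_s}^Γ‖₁ = ‖(1−p)X^Γ‖₁ = p = 1/(√d_s + 1). -/

import Mathlib

open scoped ComplexOrder

/-- Partial transpose on the second tensor factor. -/
def pt {α β : Type*} (M : Matrix (α × β) (α × β) ℂ) : Matrix (α × β) (α × β) ℂ :=
  fun p q => M (p.1, q.2) (q.1, p.2)

/-- The positive semidefinite square root of a positive semidefinite matrix
(removed from Mathlib; restored here with its former definition). -/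
noncomputable def Matrix.PosSemidef.sqrt {n 𝕜 : Type*} [Fintype n] [RCLike 𝕜] [DecidableEq n]
    {A : Matrix n n 𝕜} (hA : A.PosSemidef) : Matrix n n 𝕜 :=
  hA.1.eigenvectorUnitary.1 * Matrix.diagonal ((↑) ∘ (√·) ∘ hA.1.eigenvalues) *
    (star hA.1.eigenvectorUnitary : Matrix n n 𝕜)

/-- `X = (1/(d√d)) Σ_{ij} u_{ij} |ij⟩⟨ji|` with `u` the Fourier unitary. -/
noncomputable def fourierX (d : ℕ) : Matrix (Fin d × Fin d) (Fin d × Fin d) ℂ :=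
  fun p q => if p.1 = q.2 ∧ p.2 = q.1 then
    (((d : ℂ) * (Real.sqrt d : ℂ))⁻¹) *
      (Complex.exp (2 * Real.pi * Complex.I * (p.1 : ℕ) * (p.2 : ℕ) / d) / (Real.sqrt d : ℂ))
  else 0

/-- `Y = √d · X^Γ`. -/
noncomputable def fourierY (d : ℕ) : Matrix (Fin d × Fin d) (Fin d × Fin d) ℂ :=
  ((Real.sqrt d : ℂ)) • pt (fourierX d)

/-- `p = 1/(√d + 1)`. -/
noncomputable def pval (d : ℕ) : ℝ := 1 / (Real.sqrt d + 1)

/-- The state `ρ_{d_s}` of Proposition 1 (Supplementary Note 4): a mixture of the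
private bit defined by `X` (weight `1-p`) with a separable state built from `Y`
(weight `p`), written in the key-block form on `(A × A') × (B × B')`. -/
noncomputable def rhoDS (d : ℕ) :
    Matrix ((Fin 2 × Fin d) × (Fin 2 × Fin d)) ((Fin 2 × Fin d) × (Fin 2 × Fin d)) ℂ :=
  fun p q =>
    (1 / 2 : ℂ) *
      (if p.1.1 = 0 ∧ p.2.1 = 0 ∧ q.1.1 = 0 ∧ q.2.1 = 0 then
          ((1 : ℂ) - (pval d : ℂ)) *
            (Matrix.posSemidef_self_mul_conjTranspose (fourierX d)).sqrt
              (p.1.2, p.2.2) (q.1.2, q.2.2)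
        else if p.1.1 = 0 ∧ p.2.1 = 1 ∧ q.1.1 = 0 ∧ q.2.1 = 1 then
          (pval d : ℂ) *
            (Matrix.posSemidef_self_mul_conjTranspose (fourierY d)).sqrt
              (p.1.2, p.2.2) (q.1.2, q.2.2)
        else if p.1.1 = 1 ∧ p.2.1 = 0 ∧ q.1.1 = 1 ∧ q.2.1 = 0 then
          (pval d : ℂ) *
            (Matrix.posSemidef_conjTranspose_mul_self (fourierY d)).sqrt
              (p.1.2, p.2.2) (q.1.2, q.2.2)
        else if p.1.1 = 1 ∧ p.2.1 = 1 ∧ q.1.1 = 1 ∧ q.2.1 = 1 then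
          ((1 : ℂ) - (pval d : ℂ)) *
            (Matrix.posSemidef_conjTranspose_mul_self (fourierX d)).sqrt
              (p.1.2, p.2.2) (q.1.2, q.2.2)
        else if p.1.1 = 0 ∧ p.2.1 = 0 ∧ q.1.1 = 1 ∧ q.2.1 = 1 then
          ((1 : ℂ) - (pval d : ℂ)) * (fourierX d) (p.1.2, p.2.2) (q.1.2, q.2.2)
        else if p.1.1 = 1 ∧ p.2.1 = 1 ∧ q.1.1 = 0 ∧ q.2.1 = 0 then
          ((1 : ℂ) - (pval d : ℂ)) *
            (Matrix.conjTranspose (fourierX d)) (p.1.2, p.2.2) (q.1.2, q.2.2)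
        else 0)


/-- Trace norm `‖A‖₁ = tr √(AᴴA)`. -/
noncomputable def traceNorm {n : Type*} [Fintype n] [DecidableEq n] (A : Matrix n n ℂ) : ℝ :=
  ((Matrix.posSemidef_conjTranspose_mul_self A).sqrt.trace).re

/-- `σ_{d_s}`: the state `ρ_{d_s}` dephased on Alice's key qubit
(all off-diagonal key blocks set to zero). -/
noncomputable def sigmaDS (d : ℕ) :
    Matrix ((Fin 2 × Fin d) × (Fin 2 × Fin d)) ((Fin 2 × Fin d) × (Fin 2 × Fin d)) ℂ :=
  fun p q =>
    (1 / 2 : ℂ) *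
      (if p.1.1 = 0 ∧ p.2.1 = 0 ∧ q.1.1 = 0 ∧ q.2.1 = 0 then
          ((1 : ℂ) - (pval d : ℂ)) *
            (Matrix.posSemidef_self_mul_conjTranspose (fourierX d)).sqrt
              (p.1.2, p.2.2) (q.1.2, q.2.2)
        else if p.1.1 = 0 ∧ p.2.1 = 1 ∧ q.1.1 = 0 ∧ q.2.1 = 1 then
          (pval d : ℂ) *
            (Matrix.posSemidef_self_mul_conjTranspose (fourierY d)).sqrt
              (p.1.2, p.2.2) (q.1.2, q.2.2)
        else if p.1.1 = 1 ∧ p.2.1 = 0 ∧ q.1.1 = 1 ∧ q.2.1 = 0 then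
          (pval d : ℂ) *
            (Matrix.posSemidef_conjTranspose_mul_self (fourierY d)).sqrt
              (p.1.2, p.2.2) (q.1.2, q.2.2)
        else if p.1.1 = 1 ∧ p.2.1 = 1 ∧ q.1.1 = 1 ∧ q.2.1 = 1 then
          ((1 : ℂ) - (pval d : ℂ)) *
            (Matrix.posSemidef_conjTranspose_mul_self (fourierX d)).sqrt
              (p.1.2, p.2.2) (q.1.2, q.2.2)
        else 0)

noncomputable def ee (d : ℕ) (a b : Fin d) : ℂ :=
  Complex.exp (2 * Real.pi * Complex.I * (a : ℕ) * (b : ℕ) / d)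

open scoped MatrixOrder Matrix.Norms.L2Operator in
lemma psd_eq_sqrt_aux {n : Type*} [Fintype n] [DecidableEq n] {A B : Matrix n n ℂ}
    (hA : A.PosSemidef) (hB : B.PosSemidef) (h : A ^ 2 = B) : A = hB.sqrt := by
  have e1 : hB.sqrt = hB.1.cfc Real.sqrt := by
    simp [Matrix.PosSemidef.sqrt, Matrix.IsHermitian.cfc, Function.comp_def]
  rw [e1, ← Matrix.IsHermitian.cfc_eq, ← cfcₙ_eq_cfc (hf0 := Real.sqrt_zero),
    ← CFC.sqrt_eq_real_sqrt B hB.nonneg]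
  exact (CFC.sqrt_unique (by rw [← h, pow_two]) hA.nonneg).symm

lemma traceNorm_of_sq {n : Type*} [Fintype n] [DecidableEq n] (M : Matrix n n ℂ)
    (c : ℝ) (hc : 0 ≤ c) (f : n → Prop) [DecidablePred f]
    (h : M.conjTranspose * M = Matrix.diagonal (fun i => if f i then ((c ^ 2 : ℝ) : ℂ) else 0)) :
    traceNorm M = ∑ i : n, if f i then c else 0 := by
  set S : Matrix n n ℂ := Matrix.diagonal (fun i => if f i then ((c : ℝ) : ℂ) else 0) with hS
  have hSpsd : S.PosSemidef := by
    rw [hS, Matrix.posSemidef_diagonal_iff]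
    intro i
    split
    · exact_mod_cast hc
    · exact le_refl 0
  have hsq : S ^ 2 = M.conjTranspose * M := by
    have hfun : (fun i => (if f i then (c:ℂ) else 0) * (if f i then (c:ℂ) else 0))
        = fun i => if f i then ((c ^ 2 : ℝ) : ℂ) else 0 := by
      funext i; split <;> push_cast <;> ring
    rw [h, pow_two, hS, Matrix.diagonal_mul_diagonal, hfun]
  have hkey := psd_eq_sqrt_aux hSpsd (Matrix.posSemidef_conjTranspose_mul_self M) hsq
  rw [traceNorm, ← hkey, hS, Matrix.trace_diagonal]
  rw [Complex.re_sum]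
  congr 1
  funext i
  split <;> simp

lemma sqrt_mul_self_cast (d : ℕ) :
    ((Real.sqrt d : ℂ)) * (Real.sqrt d : ℂ) = (d : ℂ) := by
  rw [← Complex.ofReal_mul, Real.mul_self_sqrt (Nat.cast_nonneg d)]
  push_cast; rfl

lemma fourierX_apply (d : ℕ) (hd : 0 < d) (p q : Fin d × Fin d) :
    fourierX d p q = if p.1 = q.2 ∧ p.2 = q.1 then ((((d : ℝ) ^ 2)⁻¹ : ℝ) : ℂ) * ee d p.1 p.2
      else 0 := by
  rw [fourierX]
  split
  · rw [ee]
    have h1 : ((d : ℂ)) ≠ 0 := by exact_mod_cast hd.ne'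
    have h2 : ((Real.sqrt d : ℂ)) ≠ 0 := by
      exact Complex.ofReal_ne_zero.mpr (by positivity)
    have := sqrt_mul_self_cast d
    push_cast
    field_simp
    linear_combination (-1 : ℂ) * this
  · rfl

lemma ptX_apply (d : ℕ) (hd : 0 < d) (p q : Fin d × Fin d) :
    pt (fourierX d) p q = if p.1 = p.2 ∧ q.2 = q.1 then ((((d : ℝ) ^ 2)⁻¹ : ℝ) : ℂ) * ee d p.1 q.2
      else 0 := by
  rw [pt, fourierX_apply d hd]

lemma sum_ee (d : ℕ) (hd : 0 < d) (a b : Fin d) :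
    ∑ r : Fin d, (starRingEnd ℂ) (ee d r a) * ee d r b
      = if a = b then (d : ℂ) else 0 := by
  have hπ : (Real.pi : ℂ) ≠ 0 := by exact_mod_cast Real.pi_ne_zero
  have hdC : (d : ℂ) ≠ 0 := by exact_mod_cast hd.ne'
  set w : ℂ := 2 * Real.pi * Complex.I * ((b : ℕ) - (a : ℕ) : ℂ) / d with hw
  have hterm : ∀ r : Fin d, (starRingEnd ℂ) (ee d r a) * ee d r b
      = Complex.exp w ^ (r : ℕ) := by
    intro r
    rw [ee, ee, ← Complex.exp_conj, ← Complex.exp_add, ← Complex.exp_nat_mul]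
    congr 1
    have : (starRingEnd ℂ) (2 * ↑Real.pi * Complex.I * (r : ℕ) * (a : ℕ) / d)
        = -(2 * ↑Real.pi * Complex.I * (r : ℕ) * (a : ℕ) / d) := by
      simp [map_mul, map_div₀, Complex.conj_I, map_ofNat]
      ring
    rw [this, hw]
    ring
  simp_rw [hterm]
  rw [Fin.sum_univ_eq_sum_range (fun i => Complex.exp w ^ i) d]
  by_cases hab : a = b
  · subst hab
    have : w = 0 := by rw [hw]; ring
    simp [this]
  · rw [if_neg hab]
    have hpow : Complex.exp w ^ d = 1 := by
      rw [← Complex.exp_nat_mul]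
      have : (d : ℂ) * w = ((b : ℤ) - (a : ℤ) : ℤ) * (2 * Real.pi * Complex.I) := by
        rw [hw]
        field_simp
        push_cast
        ring
      rw [this, Complex.exp_int_mul_two_pi_mul_I]
    have hne : Complex.exp w ≠ 1 := by
      intro h
      rw [Complex.exp_eq_one_iff] at h
      obtain ⟨n, hn⟩ := h
      rw [hw] at hn
      have h2πI : (2 * (Real.pi : ℂ) * Complex.I) ≠ 0 := by
        simp [hπ, Complex.I_ne_zero]
      have h2 : ((b : ℕ) - (a : ℕ) : ℂ) = n * d := by
        apply mul_left_cancel₀ h2πI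
        field_simp at hn
        linear_combination (2 * (Real.pi : ℂ) * Complex.I) * hn
      have h3 : ((b : ℕ) : ℤ) - ((a : ℕ) : ℤ) = n * d := by exact_mod_cast h2
      have hb := b.isLt
      have ha := a.isLt
      have hba : (b : ℕ) ≠ (a : ℕ) := fun h => hab (Fin.ext h.symm)
      have hdZ : (0:ℤ) < (d:ℤ) := by exact_mod_cast hd
      rcases lt_trichotomy n 0 with hn0 | hn0 | hn0
      · have : n * (d:ℤ) ≤ -d := by nlinarith
        omega
      · subst hn0; simp at h3; omega
      · have : (d:ℤ) ≤ n * d := by nlinarith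
        omega
    rw [geom_sum_eq hne, hpow]
    simp

lemma sum_ee' (d : ℕ) (hd : 0 < d) (a b : Fin d) :
    ∑ r : Fin d, ee d r a * (starRingEnd ℂ) (ee d r b)
      = if a = b then (d : ℂ) else 0 := by
  have hterm : ∀ r : Fin d, ee d r a * (starRingEnd ℂ) (ee d r b)
      = (starRingEnd ℂ) ((starRingEnd ℂ) (ee d r a) * ee d r b) := by
    intro r
    rw [map_mul, Complex.conj_conj]
  rw [Finset.sum_congr rfl fun r _ => hterm r, ← map_sum, sum_ee d hd a b]
  split <;> simp

lemma comp1 (d : ℕ) (hd : 0 < d) (t : ℝ) :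
    (((t : ℂ)) • pt (fourierX d)).conjTranspose * ((t : ℂ) • pt (fourierX d))
      = Matrix.diagonal (fun i : Fin d × Fin d =>
          if i.1 = i.2 then (((t / ((d : ℝ) * Real.sqrt d)) ^ 2 : ℝ) : ℂ) else 0) := by
  funext p q
  rw [Matrix.mul_apply, Matrix.diagonal_apply]
  have hterm : ∀ r : Fin d × Fin d,
      (starRingEnd ℂ) ((((t : ℂ)) • pt (fourierX d)) r p) * ((((t : ℂ)) • pt (fourierX d)) r q)
        = if r.2 = r.1 then
            (if p.2 = p.1 ∧ q.2 = q.1 then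
              ((t : ℂ) * (t : ℂ) * ((((d : ℝ) ^ 2)⁻¹ : ℝ) : ℂ) * ((((d : ℝ) ^ 2)⁻¹ : ℝ) : ℂ)) *
                ((starRingEnd ℂ) (ee d r.1 p.2) * ee d r.1 q.2) else 0)
          else 0 := by
    intro r
    simp only [Matrix.smul_apply, smul_eq_mul, ptX_apply d hd]
    by_cases h3 : r.2 = r.1
    · by_cases hp : p.2 = p.1 <;> by_cases hq : q.2 = q.1 <;>
        first
        | (simp [h3, hp, hq, map_mul, Complex.conj_ofReal]; try ring)
        | (simp only [h3, hp, hq]; simp [map_mul, Complex.conj_ofReal]; try ring)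
    · have : ¬ (r.1 = r.2) := fun h => h3 h.symm
      simp [h3, this]
  simp only [Matrix.conjTranspose_apply, RCLike.star_def]
  rw [Finset.sum_congr rfl fun r _ => hterm r]
  rw [Fintype.sum_prod_type]
  simp only [Finset.sum_ite_eq', Finset.mem_univ, if_true]
  by_cases hpq : p.2 = p.1 ∧ q.2 = q.1
  · simp only [if_pos hpq, ← Finset.mul_sum, sum_ee d hd p.2 q.2]
    have hps : p.1 = p.2 ↔ True := by simp [hpq.1.symm]
    have hqs : q.1 = q.2 ↔ True := by simp [hpq.2.symm]
    have hpq' : (p = q) ↔ p.2 = q.2 := by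
      constructor
      · rintro rfl; rfl
      · intro h; exact Prod.ext (by rw [hpq.1.symm, h, hpq.2]) h
    by_cases hd2 : p.2 = q.2
    · rw [if_pos hd2, if_pos (hpq'.mpr hd2), if_pos (hps.mpr trivial)]
      have hr : ((t / ((d : ℝ) * Real.sqrt d)) ^ 2 : ℝ)
          = t * t * (((d : ℝ) ^ 2)⁻¹) * (((d : ℝ) ^ 2)⁻¹) * d := by
        have hds : (0:ℝ) < (d:ℝ) := by exact_mod_cast hd
        rw [div_pow, mul_pow, Real.sq_sqrt (Nat.cast_nonneg d)]
        field_simp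
      rw [hr]
      push_cast
      ring
    · rw [if_neg hd2, if_neg (fun h => hd2 (hpq'.mp h))]
      simp
  · simp only [if_neg hpq, ite_self, Finset.sum_const_zero]
    split_ifs with h1 h2
    · exfalso
      subst h1
      exact hpq ⟨h2.symm, h2.symm⟩
    · rfl
    · rfl

lemma hD (d : ℕ) (P Q : (Fin 2 × Fin d) × (Fin 2 × Fin d)) :
    (pt (rhoDS d) - pt (sigmaDS d)) P Q =
      if P.1.1 = 0 ∧ P.2.1 = 1 ∧ Q.1.1 = 1 ∧ Q.2.1 = 0 then
        (1/2 : ℂ) * (((1:ℂ) - (pval d : ℂ)) * fourierX d (P.1.2, Q.2.2) (Q.1.2, P.2.2))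
      else if P.1.1 = 1 ∧ P.2.1 = 0 ∧ Q.1.1 = 0 ∧ Q.2.1 = 1 then
        (1/2 : ℂ) * (((1:ℂ) - (pval d : ℂ)) *
          (starRingEnd ℂ) (fourierX d (Q.1.2, P.2.2) (P.1.2, Q.2.2)))
      else 0 := by
  obtain ⟨⟨k1, x1⟩, ⟨k2, x2⟩⟩ := P
  obtain ⟨⟨k3, y1⟩, ⟨k4, y2⟩⟩ := Q
  simp only [Matrix.sub_apply, pt, rhoDS, sigmaDS]
  fin_cases k1 <;> fin_cases k2 <;> fin_cases k3 <;> fin_cases k4 <;>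
    norm_num [Matrix.conjTranspose_apply]

lemma hDf (d : ℕ) (hd : 0 < d) (P Q : (Fin 2 × Fin d) × (Fin 2 × Fin d)) :
    (pt (rhoDS d) - pt (sigmaDS d)) P Q =
      if P.1.1 = 0 ∧ P.2.1 = 1 ∧ Q.1.1 = 1 ∧ Q.2.1 = 0 then
        (if P.1.2 = P.2.2 ∧ Q.2.2 = Q.1.2 then
          (((1 - pval d) / 2 * (((d : ℝ) ^ 2)⁻¹) : ℝ) : ℂ) * ee d P.1.2 Q.2.2 else 0)
      else if P.1.1 = 1 ∧ P.2.1 = 0 ∧ Q.1.1 = 0 ∧ Q.2.1 = 1 then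
        (if Q.1.2 = Q.2.2 ∧ P.2.2 = P.1.2 then
          (((1 - pval d) / 2 * (((d : ℝ) ^ 2)⁻¹) : ℝ) : ℂ) *
            (starRingEnd ℂ) (ee d Q.1.2 P.2.2) else 0)
      else 0 := by
  rw [hD d P Q, fourierX_apply d hd, fourierX_apply d hd]
  split_ifs <;>
    simp_all [map_mul, map_zero, Complex.conj_ofReal] <;> push_cast <;> ring

lemma ee_comm (d : ℕ) (a b : Fin d) : ee d a b = ee d b a := by
  rw [ee, ee]
  congr 1
  ring

lemma sum_block1 (d : ℕ) (hd : 0 < d) (c : ℂ) (B B' : Fin d) :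
    ∑ x : Fin d, c * (starRingEnd ℂ) (ee d x B) * (c * ee d x B')
      = if B = B' then c ^ 2 * d else 0 := by
  have h : ∀ x : Fin d, c * (starRingEnd ℂ) (ee d x B) * (c * ee d x B')
      = c ^ 2 * ((starRingEnd ℂ) (ee d x B) * ee d x B') := fun x => by ring
  rw [Finset.sum_congr rfl fun x _ => h x, ← Finset.mul_sum, sum_ee d hd B B']
  split_ifs <;> simp

lemma sum_block2 (d : ℕ) (hd : 0 < d) (c : ℂ) (A A' : Fin d) :
    ∑ x : Fin d, c * ee d A x * (c * (starRingEnd ℂ) (ee d A' x))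
      = if A = A' then c ^ 2 * d else 0 := by
  have h : ∀ x : Fin d, c * ee d A x * (c * (starRingEnd ℂ) (ee d A' x))
      = c ^ 2 * (ee d x A * (starRingEnd ℂ) (ee d x A')) := fun x => by
    rw [ee_comm d A x, ee_comm d A' x]; ring
  rw [Finset.sum_congr rfl fun x _ => h x, ← Finset.mul_sum, sum_ee' d hd A A']
  split_ifs <;> simp

set_option maxHeartbeats 1000000 in
lemma comp2 (d : ℕ) (hd : 0 < d) :
    (pt (rhoDS d) - pt (sigmaDS d)).conjTranspose * (pt (rhoDS d) - pt (sigmaDS d))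
      = Matrix.diagonal (fun Q : (Fin 2 × Fin d) × (Fin 2 × Fin d) =>
          if ¬ Q.1.1 = Q.2.1 ∧ Q.1.2 = Q.2.2 then
            ((((1 - pval d) / (2 * ((d : ℝ) * Real.sqrt d))) ^ 2 : ℝ) : ℂ) else 0) := by
  have hsq : (Real.sqrt d : ℂ) * (Real.sqrt d : ℂ) = (d : ℂ) := sqrt_mul_self_cast d
  have h1 : ((d : ℂ)) ≠ 0 := by exact_mod_cast hd.ne'
  have h2 : ((Real.sqrt d : ℂ)) ≠ 0 := Complex.ofReal_ne_zero.mpr (by positivity)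
  have hCC : ((((1 - pval d) / (2 * ((d : ℝ) * Real.sqrt d))) ^ 2 : ℝ) : ℂ)
      = ((1 - (pval d : ℂ)) / 2 * (((d : ℂ) ^ 2)⁻¹)) ^ 2 * d := by
    push_cast
    field_simp
    ring_nf
    linear_combination (-((pval d : ℂ) - 1) ^ 2) * hsq
  funext Q Q'
  rw [Matrix.mul_apply, Matrix.diagonal_apply]
  simp only [Matrix.conjTranspose_apply, RCLike.star_def]
  obtain ⟨⟨k, a⟩, ⟨l, b⟩⟩ := Q
  obtain ⟨⟨k', a'⟩, ⟨l', b'⟩⟩ := Q'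
  fin_cases k <;> fin_cases l <;> fin_cases k' <;> fin_cases l' <;>
    (simp_rw [hDf d hd]
     simp [Fintype.sum_prod_type, Fin.sum_univ_two, apply_ite (starRingEnd ℂ),
       ite_mul, mul_ite, mul_zero, zero_mul, ite_and, Finset.sum_ite_eq, Finset.sum_ite_eq',
       map_mul, map_ofNat, Complex.conj_ofReal, Prod.ext_iff, hCC]
     try simp only [sum_block1 d hd, sum_block2 d hd]
     try (split_ifs <;> first | rfl | simp_all | (push_cast; ring)))

lemma pval_nonneg_aux (d : ℕ) : 0 ≤ 1 - pval d := by
  rw [pval]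
  have h0 : (0:ℝ) ≤ Real.sqrt d := Real.sqrt_nonneg d
  have h1 : (0:ℝ) < Real.sqrt d + 1 := by linarith
  have : 1 / (Real.sqrt d + 1) ≤ 1 := by
    rw [div_le_one h1]; linarith
  linarith

lemma key_arith (d : ℕ) (hd : 0 < d) :
    (d : ℝ) * ((1 - pval d) / ((d : ℝ) * Real.sqrt d)) = pval d := by
  have hds : (0:ℝ) < (d:ℝ) := by exact_mod_cast hd
  have hs : (0:ℝ) < Real.sqrt d := Real.sqrt_pos.mpr hds
  have h1 : (0:ℝ) < Real.sqrt d + 1 := by linarith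
  have hdd : Real.sqrt d * Real.sqrt d = (d:ℝ) := Real.mul_self_sqrt (le_of_lt hds)
  rw [pval]
  field_simp
  nlinarith [hdd]

lemma sum1_eval (d : ℕ) (c : ℝ) :
    (∑ i : Fin d × Fin d, if i.1 = i.2 then c else 0) = d * c := by
  rw [Fintype.sum_prod_type]
  simp [Finset.sum_ite_eq, Finset.sum_ite_eq', Finset.sum_const, mul_comm]

lemma sum2_eval (d : ℕ) (c : ℝ) :
    (∑ Q : (Fin 2 × Fin d) × (Fin 2 × Fin d),
      if ¬ Q.1.1 = Q.2.1 ∧ Q.1.2 = Q.2.2 then c else 0) = 2 * ((d : ℝ) * c) := by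
  simp [Fintype.sum_prod_type, Fin.sum_univ_two, ite_and, Finset.sum_ite_eq,
    Finset.sum_ite_eq', Finset.sum_const, mul_comm]
  ring

/-- `‖ρ_{d_s}^Γ - σ_{d_s}^Γ‖₁ = ‖(1-p)X^Γ‖₁ = p = 1/(√d_s + 1)`. -/
theorem stmt8 (d : ℕ) (hd : 0 < d) :
    traceNorm (pt (rhoDS d) - pt (sigmaDS d)) =
        traceNorm (((1 : ℂ) - (pval d : ℂ)) • pt (fourierX d)) ∧
      traceNorm (((1 : ℂ) - (pval d : ℂ)) • pt (fourierX d)) = pval d ∧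
      pval d = 1 / (Real.sqrt d + 1) := by

  have hds : (0:ℝ) < (d:ℝ) := by exact_mod_cast hd
  have hs : (0:ℝ) < Real.sqrt d := Real.sqrt_pos.mpr hds
  have ht : 0 ≤ 1 - pval d := pval_nonneg_aux d
  have hcast : ((1 : ℂ) - (pval d : ℂ)) = (((1 - pval d : ℝ)) : ℂ) := by push_cast; ring
  have hX : traceNorm (((1 : ℂ) - (pval d : ℂ)) • pt (fourierX d)) = pval d := by
    rw [hcast, traceNorm_of_sq _ ((1 - pval d) / ((d : ℝ) * Real.sqrt d))
      (by positivity) (fun i => i.1 = i.2) (comp1 d hd (1 - pval d)), sum1_eval,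
      key_arith d hd]
  have hDn : traceNorm (pt (rhoDS d) - pt (sigmaDS d)) = pval d := by
    rw [traceNorm_of_sq _ ((1 - pval d) / (2 * ((d : ℝ) * Real.sqrt d)))
      (by positivity) (fun Q => ¬ Q.1.1 = Q.2.1 ∧ Q.1.2 = Q.2.2) (comp2 d hd), sum2_eval]
    rw [show (2 : ℝ) * ((d : ℝ) * ((1 - pval d) / (2 * ((d : ℝ) * Real.sqrt d))))
        = (d : ℝ) * ((1 - pval d) / ((d : ℝ) * Real.sqrt d)) by
      field_simp]
    exact key_arith d hd
  exact ⟨hDn.trans hX.symm, hX, rfl⟩
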